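/- The relational composition of two place bisimulations is a place bisimulation; consequently place bisimilarity ∼_p is a transitive relation on markings. -/

import Mathlib

/-- The additive closure `R⊕` of a place relation `R`: the least marking
relation containing `(0,0)` and closed under pairwise addition of
`R`-related places. -/
inductive AddClosure {S : Type} (R : S → S → Prop) : Multiset S → Multiset S → Prop
  | nil : AddClosure R 0 0
  | cons {s₁ s₂ : S} {m₁ m₂ : Multiset S} :
      R s₁ s₂ → AddClosure R m₁ m₂ → AddClosure R (s₁ ::ₘ m₁) (s₂ ::ₘ m₂)

/-- A transition of a P/T net: pre-set, label, post-set, with nonempty pre-set. -/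
structure NetTrans (S A : Type) where
  pre : Multiset S
  lab : A
  post : Multiset S
  pre_ne : pre ≠ 0

/-- A P/T net over places `S` and labels `A`, given by its set of transitions. -/
structure PNet (S A : Type) where
  T : Set (NetTrans S A)

/-- Firing: `m [t⟩ m'` iff `t` is a transition of the net, `pre(t) ⊆ m` and
`m' = (m − pre(t)) + post(t)`. -/
def Fires {S A : Type} [DecidableEq S] (N : PNet S A) (m : Multiset S) (t : NetTrans S A)
    (m' : Multiset S) : Prop :=
  t ∈ N.T ∧ t.pre ≤ m ∧ m' = m - t.pre + t.post

/-- Interleaving bisimulation on markings. -/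
def IntBisim {S A : Type} [DecidableEq S] (N : PNet S A)
    (R : Multiset S → Multiset S → Prop) : Prop :=
  ∀ m₁ m₂, R m₁ m₂ →
    (∀ t₁ m₁', Fires N m₁ t₁ m₁' →
      ∃ t₂ m₂', Fires N m₂ t₂ m₂' ∧ t₁.lab = t₂.lab ∧ R m₁' m₂') ∧
    (∀ t₂ m₂', Fires N m₂ t₂ m₂' →
      ∃ t₁ m₁', Fires N m₁ t₁ m₁' ∧ t₁.lab = t₂.lab ∧ R m₁' m₂')

/-- Interleaving bisimilarity `∼_int`. -/
def IntBisimilar {S A : Type} [DecidableEq S] (N : PNet S A) (m₁ m₂ : Multiset S) : Prop :=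
  ∃ R, IntBisim N R ∧ R m₁ m₂

/-- Place bisimulation. -/
def PlaceBisim {S A : Type} [DecidableEq S] (N : PNet S A) (R : S → S → Prop) : Prop :=
  ∀ m₁ m₂, AddClosure R m₁ m₂ →
    (∀ t₁ m₁', Fires N m₁ t₁ m₁' →
      ∃ t₂ m₂', Fires N m₂ t₂ m₂' ∧ AddClosure R t₁.pre t₂.pre ∧
        t₁.lab = t₂.lab ∧ AddClosure R t₁.post t₂.post ∧ AddClosure R m₁' m₂') ∧
    (∀ t₂ m₂', Fires N m₂ t₂ m₂' →
      ∃ t₁ m₁', Fires N m₁ t₁ m₁' ∧ AddClosure R t₁.pre t₂.pre ∧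
        t₁.lab = t₂.lab ∧ AddClosure R t₁.post t₂.post ∧ AddClosure R m₁' m₂')

/-- Place bisimilarity `∼_p`. -/
def PlaceBisimilar {S A : Type} [DecidableEq S] (N : PNet S A) (m₁ m₂ : Multiset S) : Prop :=
  ∃ R, PlaceBisim N R ∧ AddClosure R m₁ m₂

/-!
The additive closure `R⊕` is `Multiset.Rel R`, and lifting commutes with relational composition:
`(R₁ ∘ R₂)⊕ = R₁⊕ ∘ R₂⊕`. So a move of `m₁` matched from `m₂` via `R₁`, whose match is in turn
matched from `m₃` via `R₂`, yields a match via `R₁ ∘ R₂`; transitivity of `∼_p` follows.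
-/

namespace Multiset

variable {α β γ : Type*} {r : α → β → Prop} {p : β → γ → Prop}

theorem rel_comp_iff {s : Multiset α} {u : Multiset γ} :
    Rel (Relation.Comp r p) s u ↔ ∃ t, Rel r s t ∧ Rel p t u := by
  constructor
  · intro h
    induction h with
    | zero => exact ⟨0, .zero, .zero⟩
    | cons hab _ ih =>
      obtain ⟨b, hab, hbc⟩ := hab
      obtain ⟨t, hst, htu⟩ := ih
      exact ⟨b ::ₘ t, .cons hab hst, .cons hbc htu⟩
  · rintro ⟨t, hst, htu⟩
    induction hst generalizing u with
    | zero => rw [rel_zero_left.mp htu]; exact .zero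
    | @cons a b s t hab _ ih =>
      obtain ⟨c, u', hbc, htu', rfl⟩ := rel_cons_left.mp htu
      exact .cons ⟨b, hab, hbc⟩ (ih htu')

end Multiset

section PlaceBisim

variable {S A : Type} {R₁ R₂ : S → S → Prop}

theorem addClosure_eq_rel (R : S → S → Prop) : AddClosure R = Multiset.Rel R := by
  ext m₁ m₂
  constructor
  · intro h
    induction h with
    | nil => exact .zero
    | cons hr _ ih => exact .cons hr ih
  · intro h
    induction h with
    | zero => exact .nil
    | cons hr _ ih => exact .cons hr ih

theorem addClosure_comp_iff {m₁ m₃ : Multiset S} :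
    AddClosure (Relation.Comp R₁ R₂) m₁ m₃ ↔
      ∃ m₂, AddClosure R₁ m₁ m₂ ∧ AddClosure R₂ m₂ m₃ := by
  simp only [addClosure_eq_rel, Multiset.rel_comp_iff]

theorem AddClosure.comp {m₁ m₂ m₃ : Multiset S} (h₁ : AddClosure R₁ m₁ m₂)
    (h₂ : AddClosure R₂ m₂ m₃) : AddClosure (Relation.Comp R₁ R₂) m₁ m₃ :=
  addClosure_comp_iff.mpr ⟨m₂, h₁, h₂⟩

theorem PlaceBisim.comp [DecidableEq S] {N : PNet S A} (h₁ : PlaceBisim N R₁)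
    (h₂ : PlaceBisim N R₂) : PlaceBisim N (Relation.Comp R₁ R₂) := by
  intro m₁ m₃ hm
  obtain ⟨m₂, hm₁₂, hm₂₃⟩ := addClosure_comp_iff.mp hm
  constructor
  · intro t₁ m₁' hf₁
    obtain ⟨t₂, m₂', hf₂, hpre₁₂, hlab₁₂, hpost₁₂, hm₁₂'⟩ := (h₁ m₁ m₂ hm₁₂).1 t₁ m₁' hf₁
    obtain ⟨t₃, m₃', hf₃, hpre₂₃, hlab₂₃, hpost₂₃, hm₂₃'⟩ := (h₂ m₂ m₃ hm₂₃).1 t₂ m₂' hf₂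
    exact ⟨t₃, m₃', hf₃, hpre₁₂.comp hpre₂₃, hlab₁₂.trans hlab₂₃, hpost₁₂.comp hpost₂₃,
      hm₁₂'.comp hm₂₃'⟩
  · intro t₃ m₃' hf₃
    obtain ⟨t₂, m₂', hf₂, hpre₂₃, hlab₂₃, hpost₂₃, hm₂₃'⟩ := (h₂ m₂ m₃ hm₂₃).2 t₃ m₃' hf₃
    obtain ⟨t₁, m₁', hf₁, hpre₁₂, hlab₁₂, hpost₁₂, hm₁₂'⟩ := (h₁ m₁ m₂ hm₁₂).2 t₂ m₂' hf₂
    exact ⟨t₁, m₁', hf₁, hpre₁₂.comp hpre₂₃, hlab₁₂.trans hlab₂₃, hpost₁₂.comp hpost₂₃,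
      hm₁₂'.comp hm₂₃'⟩

end PlaceBisim

/-- The relational composition of two place bisimulations is a place
bisimulation; consequently `∼_p` is transitive. -/
theorem placeBisim_comp_trans {S A : Type} [DecidableEq S] (N : PNet S A) :
    (∀ R₁ R₂ : S → S → Prop, PlaceBisim N R₁ → PlaceBisim N R₂ →
      PlaceBisim N (Relation.Comp R₁ R₂)) ∧
    Transitive (PlaceBisimilar N) := by
  refine ⟨fun _ _ => PlaceBisim.comp, ?_⟩
  rintro m₁ m₂ m₃ ⟨R₁, hR₁, hm₁₂⟩ ⟨R₂, hR₂, hm₂₃⟩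
  exact ⟨Relation.Comp R₁ R₂, hR₁.comp hR₂, hm₁₂.comp hm₂₃⟩
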